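/- arXiv:1712.00487 — 2 statements merged into one kernel-verified Lean document; each statement's English description precedes it below -/
import Mathlib

section
/- Let X be a real Hilbert space, let m ≥ 2, and for each i ∈ {1,…,m} let T_i : X → X be firmly nonexpansive with minimal displacement vector v_i (the minimal-norm element of the closure of the range of Id − T_i). Then for every ε > 0 there exist points x_1,…,x_m ∈ X and vectors c_1,…,c_m ∈ X with ∑_{i=1}^{m} ‖c_i‖ ≤ ε such that x_i = c_i + v_i + T_i x_{i−1} for every i ∈ {1,…,m}, where x_0 := x_m. -/
/-!
Fix `β ∈ (0, 1]` and let `x` be the fixed point of the contraction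
`x ↦ (v i + T i ((1 - β) • x (i - 1)))ᵢ`. Then `c i := T i ((1 - β) • x (i - 1)) - T i (x (i - 1))`
solves the cyclic system and `∑ ‖c i‖ ≤ β ∑ ‖x i‖`, so it suffices to show `β ∑ ‖x i‖ → 0`
as `β → 0`. Comparing `(1 - β) • x (i - 1)` through `T i` with a point `z i` whose displacement
is within `η` of `v i`, firm nonexpansiveness gives
`‖x i‖² - (1 - β)² ‖x (i - 1)‖² ≤ 2η ‖x i‖ + Cᵢ`; summing over the cycle and applying
Cauchy–Schwarz yields a quadratic inequality `t² ≤ 2mη t + mCβ` for `t = β ∑ ‖x i‖`.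
-/

open scoped RealInnerProductSpace
open Finset

section

variable {X : Type*} [NormedAddCommGroup X] [InnerProductSpace ℝ X]

def FirmlyNonexpansive (T : X → X) : Prop :=
  ∀ x y, ‖T x - T y‖ ^ 2 ≤ ⟪x - y, T x - T y⟫

namespace FirmlyNonexpansive

variable {T : X → X}

theorem lipschitzWith_one (hT : FirmlyNonexpansive T) : LipschitzWith 1 T := by
  refine LipschitzWith.of_dist_le_mul fun x y => ?_
  rw [NNReal.coe_one, one_mul, dist_eq_norm, dist_eq_norm]
  have h := (hT x y).trans (real_inner_le_norm _ _)
  rcases (norm_nonneg (T x - T y)).eq_or_lt with h0 | hpos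
  · rw [← h0]
    exact norm_nonneg _
  · nlinarith

theorem inner_sub_displacement_nonneg (hT : FirmlyNonexpansive T) (y z : X) :
    0 ≤ ⟪(y - T y) - (z - T z), T y - T z⟫ := by
  rw [show (y - T y) - (z - T z) = (y - z) - (T y - T z) by abel, inner_sub_left,
    real_inner_self_eq_norm_sq]
  linarith [hT y z]

end FirmlyNonexpansive

theorem norm_sq_sub_norm_sq_le_of_inner_nonpos {x y u w : X} (h : ⟪x - y + w, x - u⟫ ≤ 0) :
    ‖x‖ ^ 2 - ‖y‖ ^ 2 ≤ 2 * ‖w‖ * (‖x‖ + ‖u‖) + ‖u‖ ^ 2 := by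
  set d := x - y
  have hy : y = x - d := by simp [d]
  have hxy : ‖x‖ ^ 2 - ‖y‖ ^ 2 = 2 * ⟪d, x⟫ - ‖d‖ ^ 2 := by
    rw [hy, norm_sub_sq_real, real_inner_comm]
    ring
  have hdx : ⟪d, x⟫ = ⟪d, x - u⟫ + ⟪d, u⟫ := by rw [← inner_add_right, sub_add_cancel]
  rw [inner_add_left] at h
  have hw : -⟪w, x - u⟫ ≤ ‖w‖ * (‖x‖ + ‖u‖) :=
    calc -⟪w, x - u⟫ ≤ ‖w‖ * ‖x - u‖ := (neg_le_abs _).trans (abs_real_inner_le_norm _ _)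
      _ ≤ ‖w‖ * (‖x‖ + ‖u‖) := mul_le_mul_of_nonneg_left (norm_sub_le _ _) (norm_nonneg _)
  have hdu : ⟪d, u⟫ ≤ ‖d‖ * ‖u‖ := real_inner_le_norm _ _
  nlinarith [sq_nonneg (‖d‖ - ‖u‖)]

theorem FirmlyNonexpansive.norm_sq_sub_norm_sq_le {T : X → X} (hT : FirmlyNonexpansive T)
    (v y z : X) :
    ‖v + T y‖ ^ 2 - ‖y‖ ^ 2 ≤ 2 * ‖z - T z - v‖ * (‖v + T y‖ + ‖v + T z‖) + ‖v + T z‖ ^ 2 := by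
  apply norm_sq_sub_norm_sq_le_of_inner_nonpos
  rw [show v + T y - y + (z - T z - v) = -((y - T y) - (z - T z)) by abel,
    show v + T y - (v + T z) = T y - T z by abel, inner_neg_left]
  linarith [hT.inner_sub_displacement_nonneg y z]

theorem le_of_sq_le_mul_add {t a b ε : ℝ} (ht : 0 ≤ t) (hε : 0 ≤ ε) (h : t ^ 2 ≤ a * t + b)
    (ha : a ≤ ε / 2) (hb : b ≤ ε ^ 2 / 4) : t ≤ ε := by
  by_contra! hlt
  nlinarith [mul_le_mul_of_nonneg_right ha ht]

section Cyclic

variable {ι : Type*} [Fintype ι]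

theorem exists_forall_eq_add_apply_smul_comp [CompleteSpace X] (σ : ι → ι) {T : ι → X → X}
    (hT : ∀ i, LipschitzWith 1 (T i)) (v : ι → X) {l : ℝ} (hl0 : 0 ≤ l) (hl1 : l < 1) :
    ∃ x : ι → X, ∀ i, x i = v i + T i (l • x (σ i)) := by
  set F : (ι → X) → ι → X := fun x i => v i + T i (l • x (σ i))
  have hF : ContractingWith ⟨l, hl0⟩ F := by
    refine ⟨hl1, LipschitzWith.of_dist_le_mul fun x y =>
      (dist_pi_le_iff (by positivity)).2 fun i => ?_⟩
    calc dist (F x i) (F y i) = dist (T i (l • x (σ i))) (T i (l • y (σ i))) :=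
          dist_add_left _ _ _
      _ ≤ dist (l • x (σ i)) (l • y (σ i)) := by simpa using (hT i).dist_le_mul _ _
      _ = l * dist (x (σ i)) (y (σ i)) := by rw [dist_smul₀, Real.norm_of_nonneg hl0]
      _ ≤ l * dist x y := mul_le_mul_of_nonneg_left (dist_le_pi_dist x y _) hl0
  exact ⟨hF.fixedPoint F, fun i => (congrFun hF.fixedPoint_isFixedPt i).symm⟩

theorem sq_mul_sum_norm_le (σ : Equiv.Perm ι) {T : ι → X → X}
    (hT : ∀ i, FirmlyNonexpansive (T i)) {v z x : ι → X} {η β : ℝ}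
    (hz : ∀ i, ‖z i - T i (z i) - v i‖ ≤ η) (hβ0 : 0 ≤ β) (hβ1 : β ≤ 1)
    (hx : ∀ i, x i = v i + T i ((1 - β) • x (σ i))) :
    (β * ∑ i, ‖x i‖) ^ 2 ≤ 2 * Fintype.card ι * η * (β * ∑ i, ‖x i‖) +
      Fintype.card ι * (∑ i, (2 * η * ‖v i + T i (z i)‖ + ‖v i + T i (z i)‖ ^ 2)) * β := by
  set S := ∑ i, ‖x i‖
  set N := ∑ i, ‖x i‖ ^ 2
  set C := ∑ i, (2 * η * ‖v i + T i (z i)‖ + ‖v i + T i (z i)‖ ^ 2)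
  have hstep : ∀ i, ‖x i‖ ^ 2 - (1 - β) ^ 2 * ‖x (σ i)‖ ^ 2 ≤
      2 * η * ‖x i‖ + (2 * η * ‖v i + T i (z i)‖ + ‖v i + T i (z i)‖ ^ 2) := by
    intro i
    have h := (hT i).norm_sq_sub_norm_sq_le (v i) ((1 - β) • x (σ i)) (z i)
    rw [← hx i, norm_smul, Real.norm_of_nonneg (by linarith), mul_pow] at h
    have hη := mul_le_mul_of_nonneg_right (hz i)
      (add_nonneg (norm_nonneg (x i)) (norm_nonneg (v i + T i (z i))))
    linarith
  have hsum : (1 - (1 - β) ^ 2) * N ≤ 2 * η * S + C := by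
    have h := sum_le_sum fun i (_ : i ∈ univ) => hstep i
    rw [sum_sub_distrib, ← mul_sum, Equiv.sum_comp σ fun i => ‖x i‖ ^ 2, sum_add_distrib,
      ← mul_sum] at h
    linarith
  have henergy : β * N ≤ 2 * η * S + C := by
    have hβ : β ≤ 1 - (1 - β) ^ 2 := by nlinarith
    linarith [mul_le_mul_of_nonneg_right hβ (by positivity : 0 ≤ N)]
  have hCS : S ^ 2 ≤ Fintype.card ι * N := by
    simpa using sq_sum_le_card_mul_sum_sq (s := univ) (f := fun i => ‖x i‖)
  calc (β * S) ^ 2 = β ^ 2 * S ^ 2 := by ring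
    _ ≤ β ^ 2 * (Fintype.card ι * N) := by gcongr
    _ = Fintype.card ι * β * (β * N) := by ring
    _ ≤ Fintype.card ι * β * (2 * η * S + C) := by gcongr
    _ = _ := by ring

theorem exists_approx_cyclic_solution [CompleteSpace X] (σ : Equiv.Perm ι) {T : ι → X → X}
    (hT : ∀ i, FirmlyNonexpansive (T i)) {v : ι → X}
    (hv : ∀ i, v i ∈ closure (Set.range fun x => x - T i x)) {ε : ℝ} (hε : 0 < ε) :
    ∃ x c : ι → X, ∑ i, ‖c i‖ ≤ ε ∧ ∀ i, x i = c i + v i + T i (x (σ i)) := by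
  set n : ℝ := (Fintype.card ι : ℝ)
  set η := ε / (4 * (n + 1))
  have hη : 0 < η := by positivity
  have hdisp : ∀ i, ∃ z, ‖z - T i z - v i‖ ≤ η := by
    intro i
    obtain ⟨_, ⟨z, rfl⟩, hz⟩ := Metric.mem_closure_iff.1 (hv i) η hη
    exact ⟨z, by rw [← dist_eq_norm, dist_comm]; exact hz.le⟩
  choose z hz using hdisp
  set C := ∑ i, (2 * η * ‖v i + T i (z i)‖ + ‖v i + T i (z i)‖ ^ 2)
  set β := min 1 (ε ^ 2 / (4 * (n * C + 1)))
  have hβ0 : 0 < β := lt_min one_pos (by positivity)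
  have hβ1 : β ≤ 1 := min_le_left _ _
  obtain ⟨x, hx⟩ := exists_forall_eq_add_apply_smul_comp σ (fun i => (hT i).lipschitzWith_one) v
    (l := 1 - β) (by linarith) (by linarith)
  refine ⟨x, fun i => T i ((1 - β) • x (σ i)) - T i (x (σ i)), ?_,
    fun i => (hx i).trans (by beta_reduce; abel)⟩
  have hc : ∀ i, ‖T i ((1 - β) • x (σ i)) - T i (x (σ i))‖ ≤ β * ‖x (σ i)‖ := fun i =>
    calc _ ≤ ‖(1 - β) • x (σ i) - x (σ i)‖ := by
          simpa using (hT i).lipschitzWith_one.norm_sub_le ((1 - β) • x (σ i)) (x (σ i))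
      _ = β * ‖x (σ i)‖ := by
          rw [show (1 - β) • x (σ i) - x (σ i) = -(β • x (σ i)) by module, norm_neg, norm_smul,
            Real.norm_of_nonneg hβ0.le]
  have ha : 2 * n * η ≤ ε / 2 :=
    calc 2 * n * η = ε / 2 * (n / (n + 1)) := by simp only [η]; field_simp; ring
      _ ≤ ε / 2 := mul_le_of_le_one_right (by positivity) (div_le_one_of_le₀ (by linarith)
          (by positivity))
  have hb : n * C * β ≤ ε ^ 2 / 4 :=
    calc n * C * β ≤ n * C * (ε ^ 2 / (4 * (n * C + 1))) :=
          mul_le_mul_of_nonneg_left (min_le_right _ _) (by positivity)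
      _ = ε ^ 2 / 4 * (n * C / (n * C + 1)) := by field_simp
      _ ≤ ε ^ 2 / 4 := mul_le_of_le_one_right (by positivity) (div_le_one_of_le₀ (by linarith)
          (by positivity))
  calc ∑ i, ‖T i ((1 - β) • x (σ i)) - T i (x (σ i))‖ ≤ ∑ i, β * ‖x (σ i)‖ :=
        sum_le_sum fun i _ => hc i
    _ = β * ∑ i, ‖x i‖ := by rw [← mul_sum, Equiv.sum_comp σ fun i => ‖x i‖]
    _ ≤ ε := le_of_sq_le_mul_add (by positivity) hε.le
        (sq_mul_sum_norm_le σ hT hz hβ0.le hβ1 hx) ha hb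

end Cyclic

end

theorem stmt_1 {X : Type*} [NormedAddCommGroup X] [InnerProductSpace ℝ X] [CompleteSpace X]
    (m : ℕ) (hm : 2 ≤ m) (T : Fin m → X → X)
    (hT : ∀ i, ∀ x y : X, ‖T i x - T i y‖ ^ 2 ≤ (inner ℝ (x - y) (T i x - T i y) : ℝ))
    (v : Fin m → X)
    (hv : ∀ i, v i ∈ closure (Set.range (fun x => x - T i x)))
    (ε : ℝ) (hε : 0 < ε) :
    ∃ x c : Fin m → X, (∑ i, ‖c i‖) ≤ ε ∧
      ∀ i : Fin m, x i = c i + v i + T i (x (i - ⟨1, by omega⟩)) := by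
  have : NeZero m := ⟨by omega⟩
  exact exists_approx_cyclic_solution (Equiv.subRight ⟨1, by omega⟩) hT hv hε
end

section
/- Let X be a real Hilbert space, let m ≥ 2, and for each i ∈ {1,…,m} let T_i : X → X be firmly nonexpansive. For each cyclic shift k ∈ {0,1,…,m−1}, let u_k denote the minimal displacement vector of the composition T_{σ^k(m)} T_{σ^k(m−1)} ⋯ T_{σ^k(1)}, where σ is the cyclic permutation sending i to i−1 modulo m (so u_0 corresponds to T_m T_{m−1} ⋯ T_1, u_1 to T_{m−1} ⋯ T_1 T_m, etc.). Then u_0 = u_1 = ⋯ = u_{m−1}. -/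
/-!
Write `S k` for the `k`-th shifted composition and `B = T (last - k)`, `R` for the rest, so that
`S k = B ∘ R` and `S (k + 1) = R ∘ B`. Firm nonexpansiveness of `B` at `z` and `R (B z)` says that
`f = z - S (k + 1) z` and `g = B z - S k (B z)` satisfy `‖g‖² ≤ ⟪f, g⟫`, hence `‖g‖ ≤ ‖f‖` and
`‖g - f‖² ≤ ‖f‖² - ‖g‖²`. The first inequality makes `‖u k‖` increase along the cycle, so all these
norms are equal; the second then puts `u (k + 1)` in the closure of the range of `Id - S k`. That
closure is convex (`Id - S k` is monotone and `Id - S k + ε Id` is onto by the Banach fixed point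
theorem), so its element of minimal norm is unique and `u (k + 1) = u k`.
-/

/-- Composition `T (m-1) ∘ ⋯ ∘ T 1 ∘ T 0` applied to `x` (apply `T 0` first),
so that with `T i` playing the role of `T_{i+1}` this is `T_m T_{m-1} ⋯ T_1 x`. -/
def compSeq {X : Type*} (m : ℕ) (T : Fin m → X → X) : X → X :=
  fun x => (List.ofFn T).foldl (fun y f => f y) x

/-- The `k`-fold cyclically shifted composition: for `k = 0` this is
`T_m T_{m-1} ⋯ T_1`, for `k = 1` it is `T_{m-1} ⋯ T_1 T_m`, etc. -/
def shiftComp {X : Type*} (m : ℕ) (T : Fin m → X → X) (k : Fin m) : X → X :=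
  compSeq m (fun j => T (j - k))

open Set Filter Topology
open scoped RealInnerProductSpace

def IsFirmlyNonexpansive {X : Type*} [NormedAddCommGroup X] [InnerProductSpace ℝ X]
    (T : X → X) : Prop :=
  ∀ x y, ‖T x - T y‖ ^ 2 ≤ ⟪x - y, T x - T y⟫

lemma convex_closure_of_combo_mem_closure {𝕜 E : Type*} [Semiring 𝕜] [PartialOrder 𝕜]
    [TopologicalSpace E] [AddCommMonoid E] [Module 𝕜 E] [ContinuousAdd E]
    [ContinuousConstSMul 𝕜 E] {s : Set E}
    (h : ∀ x ∈ s, ∀ y ∈ s, ∀ a b : 𝕜, 0 ≤ a → 0 ≤ b → a + b = 1 → a • x + b • y ∈ closure s) :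
    Convex 𝕜 (closure s) := by
  intro x hx y hy a b ha hb hab
  simpa only [closure_closure] using map_mem_closure₂ (f := fun x y => a • x + b • y)
    (by fun_prop) hx hy fun x hx y hy => h x hx y hy a b ha hb hab

lemma Convex.eq_of_norm_le_of_forall_norm_le {E : Type*} [NormedAddCommGroup E]
    [NormedSpace ℝ E] [StrictConvexSpace ℝ E] {C : Set E} (hC : Convex ℝ C) {u v : E}
    (hv : v ∈ C) (hu : u ∈ C) (hmin : ∀ w ∈ C, ‖u‖ ≤ ‖w‖) (hvu : ‖v‖ ≤ ‖u‖) : v = u := by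
  by_contra hne
  have hmid : ‖(1 / 2 : ℝ) • v + (1 / 2 : ℝ) • u‖ < ‖u‖ :=
    norm_combo_lt_of_ne hvu le_rfl hne (by norm_num) (by norm_num) (by norm_num)
  exact hmid.not_ge (hmin _ (hC hv hu (by norm_num) (by norm_num) (by norm_num)))

lemma Equiv.Perm.eq_of_le_comp {α M : Type*} [Fintype α] [AddCommMonoid M] [PartialOrder M]
    [IsOrderedCancelAddMonoid M] (e : Equiv.Perm α) {f : α → M} (h : ∀ a, f a ≤ f (e a))
    (a : α) : f (e a) = f a :=
  (((Finset.sum_eq_sum_iff_of_le fun a _ => h a).mp (Equiv.sum_comp e f).symm) a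
    (Finset.mem_univ a)).symm

lemma Fin.eq_of_forall_add_one_eq {α : Type*} {n : ℕ} {u : Fin (n + 1) → α}
    (h : ∀ k, u (k + 1) = u k) (k l : Fin (n + 1)) : u k = u l := by
  have hzero : ∀ k, u k = u 0 := fun k => by
    induction k using Fin.induction with
    | zero => rfl
    | succ i ih => rw [← Fin.coeSucc_eq_succ, h, ih]
  rw [hzero k, hzero l]

section InnerProductSpace

variable {X : Type*} [NormedAddCommGroup X] [InnerProductSpace ℝ X]

lemma norm_le_of_norm_sq_le_inner {f g : X} (h : ‖g‖ ^ 2 ≤ ⟪f, g⟫) : ‖g‖ ≤ ‖f‖ := by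
  nlinarith [h.trans (real_inner_le_norm f g), norm_nonneg f, norm_nonneg g]

lemma norm_sub_sq_le_of_norm_sq_le_inner {f g : X} (h : ‖g‖ ^ 2 ≤ ⟪f, g⟫) :
    ‖g - f‖ ^ 2 ≤ ‖f‖ ^ 2 - ‖g‖ ^ 2 := by
  rw [norm_sub_sq_real, real_inner_comm]
  linarith

lemma IsFirmlyNonexpansive.lipschitzWith_one {T : X → X} (hT : IsFirmlyNonexpansive T) :
    LipschitzWith 1 T :=
  LipschitzWith.mk_one fun x y => by
    simpa only [dist_eq_norm] using norm_le_of_norm_sq_le_inner (hT x y)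

section SqLeInner

variable {C D : Set X} (hCD : ∀ f ∈ D, ∃ g ∈ C, ‖g‖ ^ 2 ≤ ⟪f, g⟫) {u : X}
  (hmin : ∀ w ∈ closure C, ‖u‖ ≤ ‖w‖)
include hCD hmin

lemma norm_le_of_mem_closure_of_sq_le_inner : ∀ w ∈ closure D, ‖u‖ ≤ ‖w‖ := by
  refine fun w hw =>
    closure_minimal (fun f hf => ?_) (isClosed_le continuous_const continuous_norm) hw
  obtain ⟨g, hgC, hg⟩ := hCD f hf
  exact (hmin g (subset_closure hgC)).trans (norm_le_of_norm_sq_le_inner hg)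

lemma mem_closure_of_norm_le_of_sq_le_inner {v : X} (hv : v ∈ closure D) (hvu : ‖v‖ ≤ ‖u‖) :
    v ∈ closure C := by
  obtain ⟨f, hfD, hfv⟩ := mem_closure_iff_seq_limit.mp hv
  choose g hgC hg using fun n => hCD (f n) (hfD n)
  have hgap : ∀ n, ‖g n - f n‖ ≤ √(‖f n‖ ^ 2 - ‖u‖ ^ 2) := fun n => by
    rw [← abs_norm]
    refine Real.abs_le_sqrt ?_
    nlinarith [norm_sub_sq_le_of_norm_sq_le_inner (hg n), hmin (g n) (subset_closure (hgC n)),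
      norm_nonneg u]
  have hlim : Tendsto (fun n => √(‖f n‖ ^ 2 - ‖u‖ ^ 2)) atTop (𝓝 0) := by
    have h0 : √(‖v‖ ^ 2 - ‖u‖ ^ 2) = 0 :=
      Real.sqrt_eq_zero'.mpr (by nlinarith [norm_nonneg v])
    rw [← h0]
    exact ((hfv.norm.pow 2).sub_const _).sqrt
  have hgv : Tendsto g atTop (𝓝 v) := by
    simpa using hfv.add (squeeze_zero_norm (fun n => hgap n) hlim)
  exact mem_closure_of_tendsto hgv (Eventually.of_forall hgC)

end SqLeInner

section Monotone

variable {A : X → X} (hA : ∀ x y, 0 ≤ ⟪x - y, A x - A y⟫)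
include hA

-- Averaging monotonicity at `(x, y₁)` and `(x, y₂)` with weights `a, b` gives
-- `ε ‖x‖² ≤ ε ⟪q, x⟫ + K`; multiply by `ε` and use `2 ε ⟪q, ε x⟫ ≤ ε² ‖q‖² + ‖ε x‖²`.
lemma sq_norm_smul_le_of_monotone {x y₁ y₂ c : X} {a b ε : ℝ} (ha : 0 ≤ a) (hb : 0 ≤ b)
    (hab : a + b = 1) (hc : a • A y₁ + b • A y₂ = c) (hε : 0 < ε) (hx : A x + ε • x = c) :
    ‖ε • x‖ ^ 2 ≤ ε * (2 * (a * ⟪y₁, A y₁⟫ + b * ⟪y₂, A y₂⟫ - ⟪a • y₁ + b • y₂, c⟫)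
      + ε * ‖a • y₁ + b • y₂‖ ^ 2) := by
  have hAx : A x = c - ε • x := eq_sub_of_add_eq hx
  obtain rfl : b = 1 - a := by linarith
  subst hc
  set q := a • y₁ + (1 - a) • y₂
  set K := a * ⟪y₁, A y₁⟫ + (1 - a) * ⟪y₂, A y₂⟫ - ⟪q, a • A y₁ + (1 - a) • A y₂⟫
  have hmono : 0 ≤ a * ⟪x - y₁, A x - A y₁⟫ + (1 - a) * ⟪x - y₂, A x - A y₂⟫ :=
    add_nonneg (mul_nonneg ha (hA x y₁)) (mul_nonneg hb (hA x y₂))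
  have hident : a * ⟪x - y₁, A x - A y₁⟫ + (1 - a) * ⟪x - y₂, A x - A y₂⟫
      = -ε * ‖x‖ ^ 2 + ε * ⟪q, x⟫ + K := by
    rw [hAx, ← real_inner_self_eq_norm_sq]
    simp only [q, K, inner_sub_left, inner_sub_right, inner_add_left, inner_add_right,
      real_inner_smul_left, real_inner_smul_right, real_inner_comm x]
    ring
  have hbound : ε * ‖x‖ ^ 2 ≤ ε * ⟪q, x⟫ + K := by linarith
  rw [norm_smul, Real.norm_of_nonneg hε.le]
  nlinarith [mul_le_mul_of_nonneg_left hbound hε.le, sq_nonneg (ε * ‖q‖ - ε * ‖x‖),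
    mul_le_mul_of_nonneg_left (real_inner_le_norm q x) (sq_nonneg ε)]

lemma convex_closure_range_of_monotone (hsurj : ∀ ε : ℝ, 0 < ε → ∀ c, ∃ x, A x + ε • x = c) :
    Convex ℝ (closure (range A)) := by
  refine convex_closure_of_combo_mem_closure ?_
  rintro _ ⟨y₁, rfl⟩ _ ⟨y₂, rfl⟩ a b ha hb hab
  set c := a • A y₁ + b • A y₂
  set K := a * ⟪y₁, A y₁⟫ + b * ⟪y₂, A y₂⟫ - ⟪a • y₁ + b • y₂, c⟫
  set M := 2 * |K| + ‖a • y₁ + b • y₂‖ ^ 2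
  choose! x hx using fun (ε : ℝ) (hε : 0 < ε) => hsurj ε hε c
  have hsmall : ∀ ε ∈ Ioc (0 : ℝ) 1, ‖ε • x ε‖ ≤ √(ε * M) := fun ε ⟨hε, hε1⟩ => by
    have h := sq_norm_smul_le_of_monotone hA ha hb hab rfl hε (hx ε hε)
    rw [← abs_norm]
    refine Real.abs_le_sqrt (h.trans (mul_le_mul_of_nonneg_left ?_ hε.le))
    linarith [mul_le_of_le_one_left (sq_nonneg ‖a • y₁ + b • y₂‖) hε1, le_abs_self K]
  have hlim : Tendsto (fun ε => ε • x ε) (𝓝[>] 0) (𝓝 0) := by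
    refine squeeze_zero_norm' (eventually_of_mem (Ioc_mem_nhdsGT zero_lt_one) hsmall) ?_
    simpa using ((continuous_id.mul continuous_const).sqrt.tendsto (0 : ℝ)).mono_left
      (nhdsWithin_le_nhds (s := Ioi 0))
  have hAx : ∀ᶠ ε in 𝓝[>] 0, c - ε • x ε = A (x ε) :=
    eventually_nhdsWithin_of_forall fun ε hε => (eq_sub_of_add_eq (hx ε hε)).symm
  have hAc : Tendsto (fun ε => A (x ε)) (𝓝[>] 0) (𝓝 c) := by
    simpa using (tendsto_const_nhds.sub hlim).congr' hAx
  exact mem_closure_of_tendsto hAc (Eventually.of_forall fun ε => mem_range_self _)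

end Monotone

namespace LipschitzWith

variable {S : X → X} (hS : LipschitzWith 1 S)
include hS

lemma inner_sub_sub_nonneg (x y : X) : 0 ≤ ⟪x - y, (x - S x) - (y - S y)⟫ := by
  have hSxy : ‖S x - S y‖ ≤ ‖x - y‖ := by simpa using hS.norm_sub_le x y
  rw [show (x - S x) - (y - S y) = (x - y) - (S x - S y) by abel, inner_sub_right,
    real_inner_self_eq_norm_sq]
  nlinarith [real_inner_le_norm (x - y) (S x - S y), norm_nonneg (x - y), hSxy]

lemma exists_sub_add_smul_eq [CompleteSpace X] {ε : ℝ} (hε : 0 < ε) (c : X) :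
    ∃ x, x - S x + ε • x = c := by
  have hcontr : ContractingWith (⟨(1 + ε)⁻¹, by positivity⟩ : NNReal)
      fun x => (1 + ε)⁻¹ • (S x + c) := by
    refine ⟨?_, LipschitzWith.of_dist_le_mul fun x y => ?_⟩
    · exact NNReal.coe_lt_coe.mp (inv_lt_one_of_one_lt₀ (by linarith))
    · rw [dist_eq_norm, dist_eq_norm, ← smul_sub, add_sub_add_right_eq_sub, norm_smul,
        Real.norm_of_nonneg (by positivity)]
      exact mul_le_mul_of_nonneg_left (by simpa using hS.norm_sub_le x y) (by positivity)
  obtain ⟨x, hx, -⟩ := hcontr.exists_fixedPoint 0 (edist_ne_top _ _)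
  refine ⟨x, ?_⟩
  have hfix : (1 + ε) • x = S x + c := by
    conv_lhs => rw [← hx]
    rw [smul_smul, mul_inv_cancel₀ (by positivity), one_smul]
  rw [add_smul, one_smul] at hfix
  rw [sub_add_eq_add_sub, hfix]
  abel

lemma convex_closure_range_sub [CompleteSpace X] :
    Convex ℝ (closure (range fun x => x - S x)) :=
  convex_closure_range_of_monotone hS.inner_sub_sub_nonneg fun _ hε c =>
    hS.exists_sub_add_smul_eq hε c

end LipschitzWith

end InnerProductSpace

section Composition

variable {X : Type*} {n : ℕ}

lemma compSeq_succ (T : Fin (n + 1) → X → X) (x : X) :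
    compSeq (n + 1) T x = compSeq n (fun i => T i.succ) (T 0 x) := by
  simp only [compSeq, List.ofFn_succ, List.foldl_cons]

lemma compSeq_succ' (T : Fin (n + 1) → X → X) (x : X) :
    compSeq (n + 1) T x = T (Fin.last n) (compSeq n (fun i => T i.castSucc) x) := by
  simp only [compSeq, List.ofFn_succ', List.concat_eq_append, List.foldl_append,
    List.foldl_cons, List.foldl_nil]

lemma lipschitzWith_one_compSeq [PseudoMetricSpace X] {m : ℕ} {T : Fin m → X → X}
    (hT : ∀ i, LipschitzWith 1 (T i)) : LipschitzWith 1 (compSeq m T) := by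
  induction m with
  | zero => exact LipschitzWith.id
  | succ m ih =>
    rw [show compSeq (m + 1) T = compSeq m (fun i => T i.succ) ∘ T 0 from
      funext (compSeq_succ T)]
    simpa using (ih fun i => hT i.succ).comp (hT 0)

lemma shiftComp_eq_comp (T : Fin (n + 1) → X → X) (k : Fin (n + 1)) (x : X) :
    shiftComp (n + 1) T k x = T (Fin.last n - k) (compSeq n (fun i => T (i.castSucc - k)) x) :=
  compSeq_succ' _ x

lemma shiftComp_add_one_eq_comp (T : Fin (n + 1) → X → X) (k : Fin (n + 1)) (x : X) :
    shiftComp (n + 1) T (k + 1) x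
      = compSeq n (fun i => T (i.castSucc - k)) (T (Fin.last n - k) x) := by
  have hsucc : ∀ i : Fin n, i.succ - (k + 1) = i.castSucc - k := fun i => by
    rw [← Fin.coeSucc_eq_succ]; abel
  have hzero : 0 - (k + 1) = Fin.last n - k := by
    rw [← Fin.last_add_one]; abel
  simp only [shiftComp, compSeq_succ, hsucc, hzero]

end Composition

section ShiftedCompositions

variable {X : Type*} [NormedAddCommGroup X] [InnerProductSpace ℝ X] {n : ℕ}
  {T : Fin (n + 1) → X → X} (hT : ∀ i, IsFirmlyNonexpansive (T i))
include hT

lemma exists_norm_sq_le_inner_shiftComp (k : Fin (n + 1)) :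
    ∀ f ∈ range (fun x => x - shiftComp (n + 1) T (k + 1) x),
      ∃ g ∈ range (fun x => x - shiftComp (n + 1) T k x), ‖g‖ ^ 2 ≤ ⟪f, g⟫ := by
  rintro _ ⟨z, rfl⟩
  refine ⟨_, ⟨T (Fin.last n - k) z, rfl⟩, ?_⟩
  dsimp only
  rw [shiftComp_add_one_eq_comp, shiftComp_eq_comp]
  exact hT _ z _

lemma convex_closure_range_sub_shiftComp [CompleteSpace X] (k : Fin (n + 1)) :
    Convex ℝ (closure (range fun x => x - shiftComp (n + 1) T k x)) :=
  (lipschitzWith_one_compSeq fun _ => (hT _).lipschitzWith_one).convex_closure_range_sub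

end ShiftedCompositions

theorem stmt_6_general {X : Type*} [NormedAddCommGroup X] [InnerProductSpace ℝ X] [CompleteSpace X]
    (m : ℕ) (T : Fin m → X → X)
    (hT : ∀ i, ∀ x y : X, ‖T i x - T i y‖ ^ 2 ≤ (inner ℝ (x - y) (T i x - T i y) : ℝ))
    (u : Fin m → X)
    (hu : ∀ k, u k ∈ closure (Set.range (fun x => x - shiftComp m T k x)))
    (humin : ∀ k, ∀ w ∈ closure (Set.range (fun x => x - shiftComp m T k x)), ‖u k‖ ≤ ‖w‖) :
    ∀ k l : Fin m, u k = u l := by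
  cases m with
  | zero => exact fun k => k.elim0
  | succ n =>
    have hdom := exists_norm_sq_le_inner_shiftComp hT
    have hnorm : ∀ k, ‖u (k + 1)‖ = ‖u k‖ :=
      (Equiv.addRight 1).eq_of_le_comp fun k =>
        norm_le_of_mem_closure_of_sq_le_inner (hdom k) (humin k) _ (hu (k + 1))
    refine Fin.eq_of_forall_add_one_eq fun k => ?_
    have hmem :=
      mem_closure_of_norm_le_of_sq_le_inner (hdom k) (humin k) (hu (k + 1)) (hnorm k).le
    exact (convex_closure_range_sub_shiftComp hT k).eq_of_norm_le_of_forall_norm_le hmem (hu k)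
      (humin k) (hnorm k).le

theorem stmt_6 {X : Type*} [NormedAddCommGroup X] [InnerProductSpace ℝ X] [CompleteSpace X]
    (m : ℕ) (hm : 2 ≤ m) (T : Fin m → X → X)
    (hT : ∀ i, ∀ x y : X, ‖T i x - T i y‖ ^ 2 ≤ (inner ℝ (x - y) (T i x - T i y) : ℝ))
    (u : Fin m → X)
    (hu : ∀ k, u k ∈ closure (Set.range (fun x => x - shiftComp m T k x)))
    (humin : ∀ k, ∀ w ∈ closure (Set.range (fun x => x - shiftComp m T k x)), ‖u k‖ ≤ ‖w‖) :
    ∀ k l : Fin m, u k = u l :=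
  stmt_6_general m T hT u hu humin
end
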